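/- Let S(z) be the formal power series solution of S(z) - log(1 + S(z)) = z - log(1+z) with S(z) ≠ z. Then S is an involution, S(S(z)) = z, and its expansion begins S(z) = -z + (2/3)z^2 - (4/9)z^3 + (44/135)z^4 - (104/405)z^5 + O(z^6). -/

import Mathlib

/-!
Since `z - log(1 + z) = z²/2 · (1 + O(z))`, it is `φ(z)²/2` for a series `φ(z) = z + O(z²)`,
obtained from the binomial series of `(1 + w)^(1/2)`. For `f` without constant term the equation
`f - log(1 + f) = z - log(1 + z)` then reads `φ(f)² = φ(z)²`, i.e. `φ ∘ f = ±φ` since `ℚ⟦X⟧` is a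
domain. As `φ` has a compositional inverse, the solutions are `f = z` and `S = φ⁻¹ ∘ (-φ)`, and
`φ ∘ S ∘ S = -(φ ∘ S) = φ` shows `S ∘ S = z`. The first coefficients of `S` are then read off the
equation degree by degree.
-/

open PowerSeries

/-- For a formal power series `S` with zero constant term, the formal composition
`S - log(1 + S) = Σ_{m≥2} (-1)^m S^m / m`.  (Only `m ≤ n` contribute to the `n`-th
coefficient since `S` has positive order.) -/
noncomputable def zLogSeries (S : PowerSeries ℚ) : PowerSeries ℚ :=
  PowerSeries.mk fun n => ∑ m ∈ Finset.Icc 2 n, (-1 : ℚ) ^ m * (m : ℚ)⁻¹ * coeff n (S ^ m)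

/-- Formal composition `A ∘ B` of power series (meaningful when `B` has zero
constant term). -/
noncomputable def psComp (A B : PowerSeries ℚ) : PowerSeries ℚ :=
  PowerSeries.mk fun n => ∑ m ∈ Finset.range (n + 1), coeff m A * coeff n (B ^ m)

namespace PowerSeries

section Subst

variable {R : Type*} [CommRing R]

theorem coeff_pow_eq_zero_of_lt {B : R⟦X⟧} (hB : constantCoeff B = 0) {n m : ℕ} (h : n < m) :
    coeff n (B ^ m) = 0 :=
  X_pow_dvd_iff.mp (pow_dvd_pow_of_dvd (X_dvd_iff.mpr hB) m) n h

theorem coeff_subst_eq_sum_range {B : R⟦X⟧} (hB : constantCoeff B = 0) (A : R⟦X⟧) (n : ℕ) :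
    coeff n (A.subst B) = ∑ m ∈ Finset.range (n + 1), coeff m A * coeff n (B ^ m) := by
  rw [coeff_subst' (HasSubst.of_constantCoeff_zero' hB)]
  refine finsum_eq_sum_of_support_subset _ fun m hm => ?_
  simp only [Finset.coe_range, Set.mem_Iio, Function.mem_support] at hm ⊢
  by_contra h
  exact hm (by rw [coeff_pow_eq_zero_of_lt hB (by omega), smul_zero])

theorem coeff_one_subst {B : R⟦X⟧} (hB : constantCoeff B = 0) (A : R⟦X⟧) :
    coeff 1 (A.subst B) = coeff 1 A * coeff 1 B := by
  simp [coeff_subst_eq_sum_range hB, Finset.sum_range_succ]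

theorem subst_neg {B : R⟦X⟧} (hB : HasSubst B) (A : R⟦X⟧) : (-A).subst B = -A.subst B := by
  rw [← coe_substAlgHom hB, map_neg]

theorem injOn_subst {P : R⟦X⟧} (hP : constantCoeff P = 0) (hP' : IsUnit (coeff 1 P)) :
    Set.InjOn (fun f : R⟦X⟧ => P.subst f) {f | constantCoeff f = 0} := by
  have inv_subst : ∀ {f : R⟦X⟧}, constantCoeff f = 0 →
      (P.substInvOfIsUnit hP').subst (P.subst f) = f := fun {f} hf => by
    rw [← subst_comp_subst_apply (HasSubst.of_constantCoeff_zero' hP)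
      (HasSubst.of_constantCoeff_zero' hf), subst_substInvOfIsUnit_left P hP hP',
      subst_X (HasSubst.of_constantCoeff_zero' hf)]
  intro f hf g hg h
  rw [← inv_subst hf, ← inv_subst hg]
  exact congrArg (fun p : R⟦X⟧ => (P.substInvOfIsUnit hP').subst p) h

end Subst

noncomputable def sqrtOneAdd {A : Type*} [CommRing A] [Algebra ℚ A] (u : A⟦X⟧) : A⟦X⟧ :=
  (binomialSeries A (2⁻¹ : ℚ)).subst u

theorem sqrtOneAdd_sq {A : Type*} [CommRing A] [Algebra ℚ A] {u : A⟦X⟧}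
    (hu : constantCoeff u = 0) : sqrtOneAdd u ^ 2 = 1 + u := by
  have hu' := HasSubst.of_constantCoeff_zero' hu
  rw [sqrtOneAdd, ← subst_pow hu', sq, ← binomialSeries_add,
    show (2⁻¹ + 2⁻¹ : ℚ) = ((1 : ℕ) : ℚ) by norm_num, binomialSeries_nat, pow_one,
    ← coe_substAlgHom hu', map_add, map_one, substAlgHom_X]

end PowerSeries

theorem psComp_eq_subst {B : ℚ⟦X⟧} (hB : constantCoeff B = 0) (A : ℚ⟦X⟧) :
    psComp A B = A.subst B := by
  ext n
  rw [psComp, coeff_mk, coeff_subst_eq_sum_range hB]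

theorem coeff_zLogSeries_X (n : ℕ) :
    coeff n (zLogSeries X) = if 2 ≤ n then (-1 : ℚ) ^ n * (n : ℚ)⁻¹ else 0 := by
  simp only [zLogSeries, coeff_mk, coeff_X_pow, mul_ite, mul_one, mul_zero, Finset.sum_ite_eq,
    Finset.mem_Icc, le_refl, and_true]

theorem zLogSeries_eq_subst {f : ℚ⟦X⟧} (hf : constantCoeff f = 0) :
    zLogSeries f = (zLogSeries X).subst f := by
  ext n
  rw [coeff_subst_eq_sum_range hf]
  simp only [coeff_zLogSeries_X, ite_mul, zero_mul, ← Finset.sum_filter]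
  rw [zLogSeries, coeff_mk]
  congr 1
  ext m
  simp only [Finset.mem_Icc, Finset.mem_filter, Finset.mem_range]
  omega

/-- `φ(z) = z √(1 + Σ_{k ≥ 1} 2 (-1)^k z^k / (k + 2))`, so that `z - log(1 + z) = φ(z)² / 2`. -/
noncomputable def zLogRoot : ℚ⟦X⟧ :=
  X * sqrtOneAdd (X * mk fun k : ℕ => (2 * (-1) ^ (k + 1) / (k + 3) : ℚ))

theorem zLogRoot_sq : zLogRoot ^ 2 = (2 : ℚ) • zLogSeries X := by
  rw [zLogRoot, mul_pow, sqrtOneAdd_sq (by simp)]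
  ext n
  rw [coeff_smul, coeff_zLogSeries_X, mul_add, mul_one, ← mul_assoc, ← pow_succ, map_add,
    coeff_X_pow, coeff_X_pow_mul']
  rcases n with _ | _ | _ | k <;> simp
  field_simp
  ring

theorem constantCoeff_zLogRoot : constantCoeff zLogRoot = 0 := by
  simp [zLogRoot]

theorem coeff_one_zLogRoot : coeff 1 zLogRoot = 1 := by
  rw [zLogRoot, coeff_succ_X_mul, coeff_zero_eq_constantCoeff, sqrtOneAdd,
    ← coeff_zero_eq_constantCoeff_apply, coeff_subst_eq_sum_range (by simp)]
  simp

theorem constantCoeff_neg_zLogRoot : constantCoeff (-zLogRoot) = 0 := by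
  rw [map_neg, constantCoeff_zLogRoot, neg_zero]

theorem isUnit_coeff_one_zLogRoot : IsUnit (coeff 1 zLogRoot) := by
  rw [coeff_one_zLogRoot]
  exact isUnit_one

theorem two_smul_zLogSeries {f : ℚ⟦X⟧} (hf : constantCoeff f = 0) :
    (2 : ℚ) • zLogSeries f = zLogRoot.subst f ^ 2 := by
  have hf' := HasSubst.of_constantCoeff_zero' hf
  rw [zLogSeries_eq_subst hf, ← subst_pow hf', zLogRoot_sq, subst_smul hf']

theorem zLogSeries_eq_zLogSeries_X_iff {f : ℚ⟦X⟧} (hf : constantCoeff f = 0) :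
    zLogSeries f = zLogSeries X ↔ zLogRoot.subst f = zLogRoot ∨ zLogRoot.subst f = -zLogRoot := by
  rw [← sq_eq_sq_iff_eq_or_eq_neg, ← two_smul_zLogSeries hf, zLogRoot_sq,
    smul_right_inj two_ne_zero]

theorem zLogRoot_subst_injOn : Set.InjOn (fun f : ℚ⟦X⟧ => zLogRoot.subst f)
    {f | constantCoeff f = 0} :=
  injOn_subst constantCoeff_zLogRoot isUnit_coeff_one_zLogRoot

noncomputable def deckSeries : ℚ⟦X⟧ :=
  (zLogRoot.substInvOfIsUnit isUnit_coeff_one_zLogRoot).subst (-zLogRoot)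

theorem constantCoeff_deckSeries : constantCoeff deckSeries = 0 :=
  constantCoeff_subst_eq_zero constantCoeff_neg_zLogRoot _
    (constantCoeff_substInvOfIsUnit _ _)

theorem zLogRoot_subst_deckSeries : zLogRoot.subst deckSeries = -zLogRoot := by
  have hneg := HasSubst.of_constantCoeff_zero' constantCoeff_neg_zLogRoot
  rw [deckSeries, ← subst_comp_subst_apply (HasSubst.substInvOfIsUnit _ _) hneg,
    subst_substInvOfIsUnit_right _ constantCoeff_zLogRoot, subst_X hneg]

theorem deckSeries_ne_X : deckSeries ≠ X := by
  intro h
  have h1 := congrArg (coeff 1) zLogRoot_subst_deckSeries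
  rw [h, X_subst, map_neg, coeff_one_zLogRoot] at h1
  norm_num at h1

theorem zLogSeries_deckSeries : zLogSeries deckSeries = zLogSeries X :=
  (zLogSeries_eq_zLogSeries_X_iff constantCoeff_deckSeries).mpr (Or.inr zLogRoot_subst_deckSeries)

theorem eq_deckSeries_of_zLogSeries_eq {f : ℚ⟦X⟧} (hf : constantCoeff f = 0) (hfX : f ≠ X)
    (h : zLogSeries f = zLogSeries X) : f = deckSeries := by
  rcases (zLogSeries_eq_zLogSeries_X_iff hf).mp h with h | h
  · exact absurd (zLogRoot_subst_injOn hf constantCoeff_X (h.trans (X_subst _).symm)) hfX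
  · exact zLogRoot_subst_injOn hf constantCoeff_deckSeries (h.trans zLogRoot_subst_deckSeries.symm)

theorem deckSeries_subst_deckSeries : deckSeries.subst deckSeries = X := by
  have hS := HasSubst.of_constantCoeff_zero' constantCoeff_deckSeries
  refine zLogRoot_subst_injOn (constantCoeff_subst_eq_zero constantCoeff_deckSeries _
    constantCoeff_deckSeries) constantCoeff_X ?_
  show zLogRoot.subst (deckSeries.subst deckSeries) = zLogRoot.subst X
  rw [← subst_comp_subst_apply hS hS, zLogRoot_subst_deckSeries, subst_neg hS,
    zLogRoot_subst_deckSeries, neg_neg, X_subst]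

theorem coeff_zero_deckSeries : coeff 0 deckSeries = 0 := by
  rw [coeff_zero_eq_constantCoeff_apply, constantCoeff_deckSeries]

theorem coeff_one_deckSeries : coeff 1 deckSeries = -1 := by
  have h := congrArg (coeff 1) zLogRoot_subst_deckSeries
  rwa [coeff_one_subst constantCoeff_deckSeries, map_neg, coeff_one_zLogRoot, one_mul] at h

theorem coeff_two_deckSeries : coeff 2 deckSeries = 2 / 3 := by
  have h := congrArg (coeff 3) zLogSeries_deckSeries
  rw [coeff_zLogSeries_X, zLogSeries, coeff_mk, show Finset.Icc 2 3 = {2, 3} from rfl] at h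
  norm_num [pow_succ, coeff_mul, Finset.Nat.sum_antidiagonal_eq_sum_range_succ_mk,
    Finset.sum_range_succ, coeff_zero_deckSeries, coeff_one_deckSeries] at h
  linarith

theorem coeff_three_deckSeries : coeff 3 deckSeries = -4 / 9 := by
  have h := congrArg (coeff 4) zLogSeries_deckSeries
  rw [coeff_zLogSeries_X, zLogSeries, coeff_mk, show Finset.Icc 2 4 = {2, 3, 4} from rfl] at h
  norm_num [pow_succ, coeff_mul, Finset.Nat.sum_antidiagonal_eq_sum_range_succ_mk,
    Finset.sum_range_succ, coeff_zero_deckSeries, coeff_one_deckSeries, coeff_two_deckSeries] at h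
  linarith

theorem coeff_four_deckSeries : coeff 4 deckSeries = 44 / 135 := by
  have h := congrArg (coeff 5) zLogSeries_deckSeries
  rw [coeff_zLogSeries_X, zLogSeries, coeff_mk, show Finset.Icc 2 5 = {2, 3, 4, 5} from rfl] at h
  norm_num [pow_succ, coeff_mul, Finset.Nat.sum_antidiagonal_eq_sum_range_succ_mk,
    Finset.sum_range_succ, coeff_zero_deckSeries, coeff_one_deckSeries, coeff_two_deckSeries,
    coeff_three_deckSeries] at h
  linarith

theorem coeff_five_deckSeries : coeff 5 deckSeries = -104 / 405 := by
  have h := congrArg (coeff 6) zLogSeries_deckSeries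
  rw [coeff_zLogSeries_X, zLogSeries, coeff_mk, show Finset.Icc 2 6 = {2, 3, 4, 5, 6} from rfl] at h
  norm_num [pow_succ, coeff_mul, Finset.Nat.sum_antidiagonal_eq_sum_range_succ_mk,
    Finset.sum_range_succ, coeff_zero_deckSeries, coeff_one_deckSeries, coeff_two_deckSeries,
    coeff_three_deckSeries, coeff_four_deckSeries] at h
  linarith

/-- The equation `S(z) - log(1 + S(z)) = z - log(1 + z)` has a unique formal power
series solution `S` (without constant term) with `S ≠ z`; it is an involution,
`S(S(z)) = z`, and its expansion begins
`S(z) = -z + (2/3)z² - (4/9)z³ + (44/135)z⁴ - (104/405)z⁵ + O(z⁶)`. -/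
theorem deck_transformation_S :
    ∃ S : PowerSeries ℚ,
      (constantCoeff S = 0 ∧ S ≠ X ∧ zLogSeries S = zLogSeries X) ∧
      (∀ S' : PowerSeries ℚ,
        constantCoeff S' = 0 → S' ≠ X → zLogSeries S' = zLogSeries X → S' = S) ∧
      psComp S S = X ∧
      coeff 1 S = -1 ∧ coeff 2 S = 2 / 3 ∧ coeff 3 S = -4 / 9 ∧
      coeff 4 S = 44 / 135 ∧ coeff 5 S = -104 / 405 :=
  ⟨deckSeries, ⟨constantCoeff_deckSeries, deckSeries_ne_X, zLogSeries_deckSeries⟩,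
    fun _ => eq_deckSeries_of_zLogSeries_eq,
    (psComp_eq_subst constantCoeff_deckSeries _).trans deckSeries_subst_deckSeries,
    coeff_one_deckSeries, coeff_two_deckSeries, coeff_three_deckSeries, coeff_four_deckSeries,
    coeff_five_deckSeries⟩
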